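/- Let B be a Boolean algebra, Y ⊆ B a subset, and x ∈ B. Then x does NOT belong to the Boolean subalgebra of B generated by Y if and only if there exist two Boolean algebra homomorphisms h₁, h₂ : B → Bool such that h₁ y = h₂ y for every y ∈ Y, while h₁ x ≠ h₂ x. -/

import Mathlib

open Cardinal

universe u v

variable {B : Type*} [BooleanAlgebra B]

/-- A subset of a Boolean algebra containing `⊥` and `⊤` and closed under
meet, join and complement. -/
def IsBoolSubalgebra (S : Set B) : Prop :=
  ⊥ ∈ S ∧ ⊤ ∈ S ∧ (∀ a ∈ S, ∀ b ∈ S, a ⊓ b ∈ S) ∧ (∀ a ∈ S, ∀ b ∈ S, a ⊔ b ∈ S) ∧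
    ∀ a ∈ S, aᶜ ∈ S

/-- The Boolean subalgebra of `B` generated by `Y`: the smallest subset of `B`
containing `Y` which contains `⊥`, `⊤` and is closed under meet, join and complement. -/
def boolGen (Y : Set B) : Set B :=
  ⋂₀ {S : Set B | IsBoolSubalgebra S ∧ Y ⊆ S}

lemma subset_boolGen (Y : Set B) : Y ⊆ boolGen Y :=
  fun _y hy => Set.mem_sInter.2 fun _S hS => hS.2 hy

lemma isBoolSubalgebra_boolGen (Y : Set B) : IsBoolSubalgebra (boolGen Y) := by
  refine ⟨?_, ?_, ?_, ?_, ?_⟩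
  · exact Set.mem_sInter.2 fun S hS => hS.1.1
  · exact Set.mem_sInter.2 fun S hS => hS.1.2.1
  · exact fun a ha b hb => Set.mem_sInter.2 fun S hS =>
      hS.1.2.2.1 a (ha S hS) b (hb S hS)
  · exact fun a ha b hb => Set.mem_sInter.2 fun S hS =>
      hS.1.2.2.2.1 a (ha S hS) b (hb S hS)
  · exact fun a ha => Set.mem_sInter.2 fun S hS => hS.1.2.2.2.2 a (ha S hS)

/-- A subset `X` of a Boolean algebra is irredundant if no `x ∈ X` lies in the
Boolean subalgebra generated by `X \ {x}`. -/
def Irredundant (X : Set B) : Prop := ∀ x ∈ X, x ∉ boolGen (X \ {x})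

/-- `irr B`: the supremum of the cardinalities `|X|` of irredundant subsets `X ⊆ B`. -/
noncomputable def irr (B : Type u) [BooleanAlgebra B] : Cardinal.{u} :=
  ⨆ X : {X : Set B // Irredundant X}, #X.1

/-- `irr⁺ B`: the supremum of the successor cardinals `|X|⁺` over irredundant
subsets `X ⊆ B`. -/
noncomputable def irrPlus (B : Type u) [BooleanAlgebra B] : Cardinal.{u} :=
  ⨆ X : {X : Set B // Irredundant X}, Order.succ #X.1

/-!
A homomorphism `B → Bool` is the same thing as a prime ideal, its kernel, and in a Boolean
algebra every proper ideal extends to one. Equalizers of homomorphisms are subalgebras, which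
gives one direction. Conversely let `L` be the generated subalgebra and `x ∉ L`. The elements
`s ∈ L` with `s ⊓ x ∈ L` form an ideal of `L` missing `⊤`, so some `g : B → Bool` kills
all of them, in particular every `s ∈ L` below `x` or below `xᶜ`. Hence `g|L` is consistent both
with `x ↦ true` and with `xᶜ ↦ true`, and the two extensions separate `x` while agreeing on
`L`.
-/

open Order Set

variable {α : Type*}

lemma SupClosed.isIdeal_lowerClosure [SemilatticeSup α] {s : Set α} (hs : SupClosed s)
    (hne : s.Nonempty) : IsIdeal (lowerClosure s : Set α) where
  IsLowerSet := (lowerClosure s).lower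
  Nonempty := hne.mono subset_lowerClosure
  Directed := by
    rintro a ⟨a', ha', haa'⟩ b ⟨b', hb', hbb'⟩
    exact ⟨a' ⊔ b', subset_lowerClosure (hs ha' hb'), haa'.trans le_sup_left,
      hbb'.trans le_sup_right⟩

theorem Order.Ideal.IsPrime.exists_boundedLatticeHom_bool [Lattice α] [BoundedOrder α]
    {I : Ideal α} (hI : I.IsPrime) :
    ∃ f : BoundedLatticeHom α Bool, ∀ a, f a = false ↔ a ∈ I := by
  classical
  refine ⟨{ toFun a := decide (a ∉ I)
            map_sup' a b := by simp [Ideal.sup_mem_iff]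
            map_inf' a b := ?_
            map_top' := by simpa using hI.top_notMem
            map_bot' := by simp }, fun a => by simp⟩
  have hinf : a ⊓ b ∈ I ↔ a ∈ I ∨ b ∈ I :=
    ⟨hI.mem_or_mem, fun h => h.elim (I.lower inf_le_left) (I.lower inf_le_right)⟩
  simp [hinf]

theorem exists_boundedLatticeHom_bool_of_supClosed [BooleanAlgebra α] {s : Set α}
    (hs : SupClosed s) (hne : s.Nonempty) (htop : ⊤ ∉ s) :
    ∃ f : BoundedLatticeHom α Bool, ∀ a ∈ s, f a = false := by
  set I := (hs.isIdeal_lowerClosure hne).toIdeal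
  have hI : I.IsProper := Ideal.isProper_of_notMem (p := ⊤) fun ⟨a, ha, hta⟩ =>
    htop (top_le_iff.1 hta ▸ ha)
  obtain ⟨J, hIJ, hJ⟩ := hI.exists_le_maximal
  obtain ⟨f, hf⟩ := (inferInstance : J.IsPrime).exists_boundedLatticeHom_bool
  exact ⟨f, fun a ha => (hf a).2 (hIJ (subset_lowerClosure ha))⟩

namespace BooleanSubalgebra

variable [BooleanAlgebra α]

def eqLocus {β : Type*} [BooleanAlgebra β] (f g : BoundedLatticeHom α β) :
    BooleanSubalgebra α where
  carrier := {a | f a = g a}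
  supClosed' a ha b hb := by simp_all
  infClosed' a ha b hb := by simp_all
  compl_mem' ha := by simp_all
  bot_mem' := by simp

lemma eqOn_closure {β : Type*} [BooleanAlgebra β] {f g : BoundedLatticeHom α β} {s : Set α}
    (h : EqOn f g s) : EqOn f g (closure s) :=
  fun _ ha => closure_le (L := eqLocus f g) |>.2 h ha

theorem exists_eqOn_apply_eq_true {L : BooleanSubalgebra α} (g : BoundedLatticeHom α Bool)
    {z : α} (hz : ∀ s ∈ L, s ⊓ z = ⊥ → g s = false) :
    ∃ h : BoundedLatticeHom α Bool, EqOn h g L ∧ h z = true := by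
  set T := (· ⊔ zᶜ) '' {t | t ∈ L ∧ g t = false}
  have hT : SupClosed T := by
    rintro _ ⟨a, ⟨haL, hga⟩, rfl⟩ _ ⟨b, ⟨hbL, hgb⟩, rfl⟩
    exact ⟨a ⊔ b, ⟨sup_mem haL hbL, by simp [hga, hgb]⟩, sup_sup_distrib_right a b zᶜ⟩
  have htop : ⊤ ∉ T := by
    rintro ⟨t, ⟨htL, hgt⟩, ht⟩
    have htz : tᶜ ⊓ z = ⊥ := by simpa using congrArg compl ht
    simpa [map_compl', hgt] using hz tᶜ (compl_mem htL) htz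
  obtain ⟨h, hh⟩ :=
    exists_boundedLatticeHom_bool_of_supClosed hT ⟨_, ⊥, ⟨bot_mem, by simp⟩, rfl⟩ htop
  have hker : ∀ t ∈ L, g t = false → h t = false ∧ h zᶜ = false := fun t htL hgt => by
    simpa using hh _ ⟨t, ⟨htL, hgt⟩, rfl⟩
  refine ⟨h, fun s hs => ?_, by simpa [map_compl'] using (hker ⊥ bot_mem (by simp)).2⟩
  cases hgs : g s
  · exact (hker s hs hgs).1
  · simpa [map_compl'] using (hker sᶜ (compl_mem hs) (by simp [hgs])).1

theorem exists_boundedLatticeHom_bool_eqOn_ne {L : BooleanSubalgebra α} {x : α} (hx : x ∉ L) :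
    ∃ h₁ h₂ : BoundedLatticeHom α Bool, EqOn h₁ h₂ L ∧ h₁ x ≠ h₂ x := by
  set K := {s | s ∈ L ∧ s ⊓ x ∈ L}
  have hK : SupClosed K := fun a ⟨haL, hax⟩ b ⟨hbL, hbx⟩ =>
    ⟨sup_mem haL hbL, by simpa [inf_sup_right] using sup_mem hax hbx⟩
  obtain ⟨g, hg⟩ := exists_boundedLatticeHom_bool_of_supClosed hK ⟨⊥, bot_mem, by simp⟩
    fun h => hx (by simpa using h.2)
  obtain ⟨h₁, hh₁, hx₁⟩ := exists_eqOn_apply_eq_true (L := L) g (z := x)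
    fun s hs hsx => hg s ⟨hs, hsx ▸ bot_mem⟩
  obtain ⟨h₂, hh₂, hx₂⟩ := exists_eqOn_apply_eq_true (L := L) g (z := xᶜ)
    fun s hs hsx => by
      have hsx' : s ≤ x := disjoint_compl_right_iff.1 (disjoint_iff.2 hsx)
      exact hg s ⟨hs, by rwa [inf_eq_left.2 hsx']⟩
  refine ⟨h₁, h₂, hh₁.trans hh₂.symm, ?_⟩
  simp_all

lemma isBoolSubalgebra (L : BooleanSubalgebra α) : IsBoolSubalgebra (L : Set α) :=
  ⟨bot_mem, top_mem, fun _ ha _ hb => inf_mem ha hb, fun _ ha _ hb => sup_mem ha hb,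
    fun _ => compl_mem⟩

end BooleanSubalgebra

def IsBoolSubalgebra.toBooleanSubalgebra [BooleanAlgebra α] {S : Set α}
    (hS : IsBoolSubalgebra S) : BooleanSubalgebra α where
  carrier := S
  supClosed' a ha b hb := hS.2.2.2.1 a ha b hb
  infClosed' a ha b hb := hS.2.2.1 a ha b hb
  compl_mem' := hS.2.2.2.2 _
  bot_mem' := hS.1

lemma boolGen_eq_closure [BooleanAlgebra α] (Y : Set α) :
    boolGen Y = BooleanSubalgebra.closure Y := by
  refine (sInter_subset_of_mem ?_).antisymm ?_
  · exact ⟨(BooleanSubalgebra.closure Y).isBoolSubalgebra, BooleanSubalgebra.subset_closure⟩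
  · exact BooleanSubalgebra.closure_le (L := (isBoolSubalgebra_boolGen Y).toBooleanSubalgebra).2
      (subset_boolGen Y)

/-- `x` does not belong to the Boolean subalgebra generated by `Y` iff
two homomorphisms `B → Bool` agree on `Y` but differ at `x`. -/
theorem statement8 {B : Type u} [BooleanAlgebra B] (Y : Set B) (x : B) :
    x ∉ boolGen Y ↔ ∃ h₁ h₂ : BoundedLatticeHom B Bool,
      (∀ y ∈ Y, h₁ y = h₂ y) ∧ h₁ x ≠ h₂ x := by
  rw [boolGen_eq_closure, SetLike.mem_coe]
  constructor
  · intro hx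
    obtain ⟨h₁, h₂, heq, hne⟩ := BooleanSubalgebra.exists_boundedLatticeHom_bool_eqOn_ne hx
    exact ⟨h₁, h₂, fun y hy => heq (BooleanSubalgebra.subset_closure hy), hne⟩
  · rintro ⟨h₁, h₂, heq, hne⟩ hx
    exact hne (BooleanSubalgebra.eqOn_closure heq hx)
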